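/- Fix 1 ≤ j ≤ k with n_j even and positive, let e ≥ 1 be an integer, and let I be the ideal of R generated by x_{0,j}, x_{1,j}, …, x_{n_j/2 − 1, j}. Then there exists a non-zero scalar c ∈ 𝕜 (in fact a positive rational number) such that Δ_j^{e·n_j/2}(x_{0,j}^e) − c · x_{n_j/2, j}^{e} ∈ I; that is, Δ_j^{e n_j/2}(x_{0,j}^e) is congruent modulo I to a non-zero multiple of x_{n_j/2,j}^{e}. -/
import Mathlib


open MvPolynomial Finset

variable (𝕜 : Type) [Field 𝕜] [CharZero 𝕜] (k : ℕ) (n : Fin k → ℕ)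

/- STATEMENT 11: for `n_j` even and positive, `Δ_j^{e·n_j/2}(x_{0,j}^e)` is congruent
modulo `I = (x_{0,j}, …, x_{n_j/2 - 1, j})` to a non-zero (positive rational) multiple of
`x_{n_j/2, j}^e`. -/

/-- The variable `x_{i,j}` (as `X ⟨j,i⟩`), or `0` if `i` is out of range. -/
noncomputable def Xv (j : Fin k) (i : ℕ) : MvPolynomial (Σ j : Fin k, Fin (n j + 1)) 𝕜 :=
  if h : i ≤ n j then MvPolynomial.X ⟨j, ⟨i, Nat.lt_succ_of_le h⟩⟩ else 0

/-- The derivation `Δ_j` with `Δ_j x_{i,j} = (n_j - i)(i+1) x_{i+1,j}`. -/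
noncomputable def Δw (j : Fin k) : Derivation 𝕜 (MvPolynomial (Σ j : Fin k, Fin (n j + 1)) 𝕜)
    (MvPolynomial (Σ j : Fin k, Fin (n j + 1)) 𝕜) :=
  mkDerivation 𝕜 fun v =>
    if v.1 = j then C ((((n v.1 - (v.2 : ℕ)) * ((v.2 : ℕ) + 1) : ℕ)) : 𝕜) * Xv 𝕜 k n v.1 ((v.2 : ℕ) + 1)
    else 0

theorem Derivation.iterate_leibniz' {R A : Type*} [CommRing R] [CommRing A] [Algebra R A]
    (D : Derivation R A A) (p q : A) (t : ℕ) :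
    (⇑D)^[t] (p * q) =
      ∑ k ∈ range (t + 1), t.choose k • ((⇑D)^[t - k] p * (⇑D)^[k] q) := by
  have hD : ∀ a b : A, D (a * b) = D a * b + a * D b := by
    intro a b; rw [D.leibniz]; simp only [smul_eq_mul]; ring
  induction t with
  | zero => simp [Finset.range]
  | succ n IH =>
    calc
      (⇑D)^[n + 1] (p * q) =
          D (∑ k ∈ range n.succ,
              n.choose k • ((⇑D)^[n - k] p * (⇑D)^[k] q)) := by
        rw [Function.iterate_succ_apply', IH]
      _ = (∑ k ∈ range n.succ,
            n.choose k • ((⇑D)^[n - k + 1] p * (⇑D)^[k] q)) +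
          ∑ k ∈ range n.succ,
            n.choose k • ((⇑D)^[n - k] p * (⇑D)^[k + 1] q) := by
        simp_rw [map_sum, map_nsmul, hD, Function.iterate_succ_apply',
          smul_add, sum_add_distrib]
      _ = (∑ k ∈ range n.succ,
                n.choose k.succ • ((⇑D)^[n - k] p * (⇑D)^[k + 1] q)) +
              1 • ((⇑D)^[n + 1] p * (⇑D)^[0] q) +
            ∑ k ∈ range n.succ, n.choose k • ((⇑D)^[n - k] p * (⇑D)^[k + 1] q) :=
        ?_
      _ = ((∑ k ∈ range n.succ, n.choose k • ((⇑D)^[n - k] p * (⇑D)^[k + 1] q)) +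
              ∑ k ∈ range n.succ,
                n.choose k.succ • ((⇑D)^[n - k] p * (⇑D)^[k + 1] q)) +
            1 • ((⇑D)^[n + 1] p * (⇑D)^[0] q) := by
        rw [add_comm, add_assoc]
      _ = (∑ i ∈ range n.succ,
              (n + 1).choose (i + 1) • ((⇑D)^[n + 1 - (i + 1)] p * (⇑D)^[i + 1] q)) +
            1 • ((⇑D)^[n + 1] p * (⇑D)^[0] q) := by
        simp_rw [Nat.choose_succ_succ, Nat.succ_sub_succ, add_smul, sum_add_distrib]
      _ = ∑ k ∈ range n.succ.succ,
            n.succ.choose k • ((⇑D)^[n.succ - k] p * (⇑D)^[k] q) := by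
        rw [sum_range_succ' _ n.succ, Nat.choose_zero_right, tsub_zero]
    congr
    refine (sum_range_succ' _ _).trans (congr_arg₂ (· + ·) ?_ ?_)
    · rw [sum_range_succ, Nat.choose_succ_self, zero_smul, add_zero]
      refine sum_congr rfl fun k hk => ?_
      rw [Finset.mem_range] at hk
      rw [tsub_add_eq_add_tsub (Nat.succ_le_of_lt hk), Nat.succ_sub_succ]
    · rw [Nat.choose_zero_right, tsub_zero]

lemma Δw_Xv (j : Fin k) (i : ℕ) :
    Δw 𝕜 k n j (Xv 𝕜 k n j i) = C (((n j - i) * (i + 1) : ℕ) : 𝕜) * Xv 𝕜 k n j (i + 1) := by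
  by_cases h : i ≤ n j
  · rw [Xv, dif_pos h, Δw, mkDerivation_X]
    simp
  · rw [Xv, dif_neg h]
    have h0 : n j - i = 0 := Nat.sub_eq_zero_of_le (le_of_not_ge h)
    simp [h0]

lemma iterΔ_X0 (j : Fin k) (a : ℕ) :
    (⇑(Δw 𝕜 k n j))^[a] (Xv 𝕜 k n j 0) =
      C (((∏ i ∈ range a, ((n j - i) * (i + 1))) : ℕ) : 𝕜) * Xv 𝕜 k n j a := by
  induction a with
  | zero => simp
  | succ a ih =>
    rw [Function.iterate_succ_apply', ih, Derivation.leibniz, derivation_C, smul_zero,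
      add_zero, smul_eq_mul, Δw_Xv, ← mul_assoc, ← C_mul, prod_range_succ]
    push_cast
    ring_nf

section Gd
variable {𝕜 k n}

/-- weighted count of a monomial exponent -/
def W (g : (Σ j : Fin k, Fin (n j + 1)) → ℕ) (μ : (Σ j : Fin k, Fin (n j + 1)) →₀ ℕ) : ℕ :=
  μ.sum fun v c => g v * c

lemma W_add (g : (Σ j : Fin k, Fin (n j + 1)) → ℕ) (μ ν : (Σ j : Fin k, Fin (n j + 1)) →₀ ℕ) :
    W g (μ + ν) = W g μ + W g ν :=
  Finsupp.sum_add_index' (fun v => mul_zero _) (fun v c1 c2 => mul_add _ _ _)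

lemma W_single (g : (Σ j : Fin k, Fin (n j + 1)) → ℕ) (v) (c : ℕ) :
    W g (Finsupp.single v c) = g v * c :=
  Finsupp.sum_single_index (mul_zero _)

/-- the support invariant: all variables in column `j`, total degree `d`, weight `t`. -/
def Gd (j : Fin k) (d t : ℕ) (p : MvPolynomial (Σ j : Fin k, Fin (n j + 1)) 𝕜) : Prop :=
  ∀ μ ∈ p.support, (∀ v ∈ μ.support, v.1 = j) ∧
    W (fun _ => 1) μ = d ∧ W (fun v => (v.2 : ℕ)) μ = t

lemma Gd_zero (j : Fin k) (d t : ℕ) : Gd (𝕜 := 𝕜) (n := n) j d t 0 := by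
  intro μ hμ; simp only [MvPolynomial.support_zero] at hμ; exact absurd hμ (Finset.notMem_empty μ)

lemma Gd_add {j : Fin k} {d t : ℕ} {p q : MvPolynomial (Σ j : Fin k, Fin (n j + 1)) 𝕜}
    (hp : Gd j d t p) (hq : Gd j d t q) : Gd j d t (p + q) := by
  classical
  intro μ hμ
  rcases Finset.mem_union.mp (MvPolynomial.support_add hμ) with h | h
  exacts [hp μ h, hq μ h]

lemma Gd_step {j : Fin k} {d t : ℕ} {p : MvPolynomial (Σ j : Fin k, Fin (n j + 1)) 𝕜}
    (hp : Gd j d t p) : Gd j d (t + 1) (Δw 𝕜 k n j p) := by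
  classical
  have key : ∀ μ ∈ p.support, Gd (𝕜 := 𝕜) j d (t + 1) (Δw 𝕜 k n j (monomial μ (coeff μ p))) := by
    intro μ hμ
    obtain ⟨hcol, hd, ht⟩ := hp μ hμ
    rw [Δw, mkDerivation_monomial]
    intro μ' hμ'
    have hμ'2 := MvPolynomial.support_smul hμ'
    rw [Finsupp.sum] at hμ'2
    -- analyze the finite sum over μ.support
    set Q : ((Σ j : Fin k, Fin (n j + 1)) →₀ ℕ) → Prop := fun ν =>
      (∀ v ∈ ν.support, v.1 = j) ∧ W (fun _ => 1) ν = d ∧ W (fun v => (v.2 : ℕ)) ν = t + 1 with hQ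
    refine Finset.sum_induction _
      (fun q : MvPolynomial ((j : Fin k) × Fin (n j + 1)) 𝕜 => ∀ μ'' ∈ q.support, Q μ'')
      ?_ ?_ ?_ μ' hμ'2
    · intro a b ha hb μ'' hμ''
      rcases Finset.mem_union.mp (MvPolynomial.support_add hμ'') with h | h
      exacts [ha μ'' h, hb μ'' h]
    · intro μ'' hμ''; simp at hμ''
    · -- single term for v ∈ μ.support
      rintro ⟨a, i⟩ hv μ'' hμ''
      have hvj : j = a := (hcol ⟨a, i⟩ hv).symm
      subst hvj
      rw [if_pos rfl] at hμ''
      set v : Σ j : Fin k, Fin (n j + 1) := ⟨j, i⟩ with hvdef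
      have hv1 : 1 ≤ μ v := Nat.one_le_iff_ne_zero.mpr (Finsupp.mem_support_iff.mp hv)
      by_cases hle : (i : ℕ) + 1 ≤ n j
      · -- the term is a monomial
        set v' : Σ j : Fin k, Fin (n j + 1) := ⟨j, ⟨(i : ℕ) + 1, Nat.lt_succ_of_le hle⟩⟩ with hv'
        have hXv : Xv 𝕜 k n j ((i : ℕ) + 1) = X v' := by
          rw [Xv, dif_pos hle]
        rw [show Xv 𝕜 k n (v.fst) ((v.snd : ℕ) + 1) = X v' from hXv] at hμ''
        have hterm : (monomial (μ - Finsupp.single v 1) ((μ v : ℕ) : 𝕜)) •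
            (C ((((n v.1 - (v.2 : ℕ)) * ((v.2 : ℕ) + 1) : ℕ)) : 𝕜) * X v') =
            monomial ((μ - Finsupp.single v 1) + Finsupp.single v' 1)
              (((μ v : ℕ) : 𝕜) * ((((n v.1 - (v.2 : ℕ)) * ((v.2 : ℕ) + 1) : ℕ)) : 𝕜)) := by
          rw [smul_eq_mul]
          rw [show (X v' : MvPolynomial (Σ j : Fin k, Fin (n j + 1)) 𝕜) =
            monomial (Finsupp.single v' 1) 1 from rfl]
          rw [C_mul_monomial, monomial_mul, mul_one]
        rw [hterm] at hμ''
        have hμ''eq : μ'' = (μ - Finsupp.single v 1) + Finsupp.single v' 1 := by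
          rcases (Finset.mem_singleton.mp (support_monomial_subset hμ''))
          rfl
        subst hμ''eq
        have hsplit : (μ - Finsupp.single v 1) + Finsupp.single v 1 = μ := by
          ext w
          simp only [Finsupp.add_apply, Finsupp.tsub_apply, Finsupp.single_apply]
          split_ifs with h
          · subst h; omega
          · omega
        rw [hQ]
        constructor
        · intro w hw
          rcases Finset.mem_union.mp (Finsupp.support_add hw) with h | h
          · exact hcol w (Finsupp.support_tsub h)
          · have := Finsupp.support_single_subset h
            rw [Finset.mem_singleton] at this
            subst this
            rfl
        · have h1 : W (fun _ => 1) (μ - Finsupp.single v 1) + 1 = d := by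
            have := W_add (fun _ => 1) (μ - Finsupp.single v 1) (Finsupp.single v 1)
            rw [hsplit, W_single] at this
            omega
          have h2 : W (fun v => (v.2 : ℕ)) (μ - Finsupp.single v 1) + ((v.2 : ℕ)) = t := by
            have := W_add (fun v : (Σ j : Fin k, Fin (n j + 1)) => (v.2 : ℕ))
              (μ - Finsupp.single v 1) (Finsupp.single v 1)
            rw [hsplit, W_single] at this
            omega
          constructor
          · rw [W_add, W_single]; omega
          · rw [W_add, W_single]
            show W _ _ + ((v.2 : ℕ) + 1) * 1 = t + 1
            omega
      · -- out of range: the factor is zero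
        exfalso
        have hXv : Xv 𝕜 k n j ((i : ℕ) + 1) = 0 := by rw [Xv, dif_neg hle]
        rw [show Xv 𝕜 k n (v.fst) ((v.snd : ℕ) + 1) = 0 from hXv, mul_zero, smul_zero] at hμ''
        simp at hμ''
  have : Gd (𝕜 := 𝕜) j d (t + 1)
      (Δw 𝕜 k n j (∑ μ ∈ p.support, monomial μ (coeff μ p))) := by
    rw [map_sum]
    exact Finset.sum_induction _ _ (fun a b => Gd_add) (Gd_zero j d (t+1)) key
  rwa [p.support_sum_monomial_coeff] at this

end Gd

section Gd2
variable {𝕜 k n}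

lemma Gd_start (j : Fin k) (e : ℕ) : Gd (𝕜 := 𝕜) (n := n) j e 0 (Xv 𝕜 k n j 0 ^ e) := by
  intro μ hμ
  rw [Xv, dif_pos (Nat.zero_le _), support_X_pow, Finset.mem_singleton] at hμ
  subst hμ
  refine ⟨?_, ?_, ?_⟩
  · intro w hw
    have := Finsupp.support_single_subset hw
    rw [Finset.mem_singleton] at this; subst this; rfl
  · rw [W_single]; omega
  · rw [W_single]
    simp

lemma Gd_iter (j : Fin k) (e t : ℕ) :
    Gd (𝕜 := 𝕜) (n := n) j e t ((⇑(Δw 𝕜 k n j))^[t] (Xv 𝕜 k n j 0 ^ e)) := by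
  induction t with
  | zero => exact Gd_start j e
  | succ t ih => rw [Function.iterate_succ_apply']; exact Gd_step ih

lemma mem_of_Gd {j : Fin k} {d t : ℕ} {p : MvPolynomial (Σ j : Fin k, Fin (n j + 1)) 𝕜}
    (h : Gd j d t p) (hlt : t < (n j / 2) * d) :
    p ∈ Ideal.span {p : MvPolynomial (Σ j : Fin k, Fin (n j + 1)) 𝕜 |
      ∃ v : Σ j : Fin k, Fin (n j + 1), v.1 = j ∧ (v.2 : ℕ) < n j / 2 ∧ p = X v} := by
  classical
  rw [← p.support_sum_monomial_coeff]
  refine Ideal.sum_mem _ fun μ hμ => ?_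
  obtain ⟨hcol, hd, ht⟩ := h μ hμ
  have hex : ∃ v ∈ μ.support, (v.2 : ℕ) < n j / 2 := by
    by_contra hno
    push_neg at hno
    have hge : (n j / 2) * d ≤ t := by
      rw [← hd, ← ht, W, W, Finsupp.sum, Finsupp.sum, Finset.mul_sum]
      refine Finset.sum_le_sum fun v hv => ?_
      have hno' := hno v hv
      simp only [one_mul]
      exact Nat.mul_le_mul_right _ (by omega)
    omega
  obtain ⟨v, hv, hvm⟩ := hex
  have hv1 : 1 ≤ μ v := Nat.one_le_iff_ne_zero.mpr (Finsupp.mem_support_iff.mp hv)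
  have hmono : (monomial μ (coeff μ p) : MvPolynomial (Σ j : Fin k, Fin (n j + 1)) 𝕜) =
      X v * monomial (μ - Finsupp.single v 1) (coeff μ p) := by
    have hfe : (Finsupp.single v 1) + (μ - Finsupp.single v 1) = μ := by
      ext w
      simp only [Finsupp.add_apply, Finsupp.tsub_apply, Finsupp.single_apply]
      split_ifs with hww
      · subst hww; omega
      · omega
    rw [show (X v : MvPolynomial (Σ j : Fin k, Fin (n j + 1)) 𝕜) =
      monomial (Finsupp.single v 1) 1 from rfl, monomial_mul, one_mul, hfe]
  rw [hmono]
  exact Ideal.mul_mem_right _ _ (Ideal.subset_span ⟨v, hcol v hv, hvm, rfl⟩)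

end Gd2

theorem delta_iter_top_term (𝕜 : Type) [Field 𝕜] [CharZero 𝕜] (k : ℕ) (hk : 1 ≤ k)
    (n : Fin k → ℕ) (j : Fin k) (hpos : 0 < n j) (heven : Even (n j))
    (e : ℕ) (he : 1 ≤ e) :
    ∃ c : 𝕜, c ≠ 0 ∧ (∃ r : ℚ, 0 < r ∧ c = (r : 𝕜)) ∧
      (⇑(Δw 𝕜 k n j))^[e * (n j / 2)] (Xv 𝕜 k n j 0 ^ e) -
          C c * Xv 𝕜 k n j (n j / 2) ^ e ∈
        Ideal.span {p : MvPolynomial (Σ j : Fin k, Fin (n j + 1)) 𝕜 |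
          ∃ v : Σ j : Fin k, Fin (n j + 1), v.1 = j ∧ (v.2 : ℕ) < n j / 2 ∧ p = X v} := by
  classical
  set m := n j / 2 with hm
  have hm1 : 1 ≤ m := by
    obtain ⟨c, hc⟩ := heven
    omega
  have hmn : m ≤ n j := by omega
  set I := Ideal.span {p : MvPolynomial (Σ j : Fin k, Fin (n j + 1)) 𝕜 |
    ∃ v : Σ j : Fin k, Fin (n j + 1), v.1 = j ∧ (v.2 : ℕ) < m ∧ p = X v} with hI
  set lam : ℕ → ℕ := fun a => ∏ i ∈ range a, ((n j - i) * (i + 1)) with hlam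
  have hlam_pos : 0 < lam m := Finset.prod_pos fun i hi => by
    rw [Finset.mem_range] at hi
    exact Nat.mul_pos (by omega) (by omega)
  have main : ∀ e : ℕ, ∃ r : ℚ, 0 < r ∧
      (⇑(Δw 𝕜 k n j))^[e * m] (Xv 𝕜 k n j 0 ^ e) - C ((r : 𝕜)) * Xv 𝕜 k n j m ^ e ∈ I := by
    intro e
    induction e with
    | zero =>
      refine ⟨1, one_pos, ?_⟩
      have h0 : (0 : ℕ) * m = 0 := by omega
      rw [h0]
      simpa using Ideal.zero_mem I
    | succ e ih =>
      obtain ⟨r, hr, hw⟩ := ih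
      set D := Δw 𝕜 k n j with hD
      set x0 := Xv 𝕜 k n j 0 with hx0
      set xm := Xv 𝕜 k n j m with hxm
      set t := (e + 1) * m with htdef
      have htm : m ≤ t := by rw [htdef, Nat.succ_mul]; omega
      have hts : t - m = e * m := by rw [htdef, Nat.succ_mul]; omega
      have hexp : (⇑D)^[t] (x0 ^ (e + 1)) =
          ∑ i ∈ range (t + 1), t.choose i • ((⇑D)^[t - i] (x0 ^ e) * (⇑D)^[i] x0) := by
        rw [pow_succ, Derivation.iterate_leibniz']
      set r' : ℚ := (t.choose m : ℚ) * (lam m : ℚ) * r with hr'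
      have hr'pos : 0 < r' := by
        have h1 : 0 < (t.choose m : ℚ) := by exact_mod_cast Nat.choose_pos htm
        have h2 : 0 < (lam m : ℚ) := by exact_mod_cast hlam_pos
        exact mul_pos (mul_pos h1 h2) hr
      refine ⟨r', hr'pos, ?_⟩
      have hmem : ∀ i ∈ (range (t + 1)).erase m,
          t.choose i • ((⇑D)^[t - i] (x0 ^ e) * (⇑D)^[i] x0) ∈ I := by
        intro i hi
        obtain ⟨hne, hirange⟩ := Finset.mem_erase.mp hi
        rw [Finset.mem_range] at hirange
        rcases lt_or_gt_of_ne hne with hlt | hgt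
        · -- i < m
          have hin : i ≤ n j := by omega
          set v : Σ j : Fin k, Fin (n j + 1) := ⟨j, ⟨i, Nat.lt_succ_of_le hin⟩⟩ with hv
          have hXi : Xv 𝕜 k n j i = X v := by rw [Xv, dif_pos hin]
          have hDi : (⇑D)^[i] x0 = C ((lam i : ℕ) : 𝕜) * X v := by
            rw [hx0, hD, iterΔ_X0, hXi]
          have hrw : t.choose i • ((⇑D)^[t - i] (x0 ^ e) * (⇑D)^[i] x0) =
              ((t.choose i : MvPolynomial (Σ j : Fin k, Fin (n j + 1)) 𝕜) *
                ((⇑D)^[t - i] (x0 ^ e)) * C ((lam i : ℕ) : 𝕜)) * X v := by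
            rw [hDi, nsmul_eq_mul]; ring
          rw [hrw]
          exact Ideal.mul_mem_left _ _ (Ideal.subset_span ⟨v, rfl, hlt, rfl⟩)
        · -- i > m
          have hGd := Gd_iter (𝕜 := 𝕜) (n := n) j e (t - i)
          have hlt' : t - i < m * e := by
            have h2 : t = e * m + m := by rw [htdef, Nat.succ_mul]
            have h3 : m * e = e * m := Nat.mul_comm m e
            omega
          have hmemI := mem_of_Gd hGd (by rw [← hm] at *; exact hlt')
          rw [nsmul_eq_mul]
          exact Ideal.mul_mem_left _ _ (Ideal.mul_mem_right _ _ hmemI)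
      rw [hexp, ← Finset.add_sum_erase _ _ (Finset.mem_range.mpr (by omega) : m ∈ range (t + 1))]
      have hDm : (⇑D)^[m] x0 = C ((lam m : ℕ) : 𝕜) * xm := by
        rw [hx0, hD, iterΔ_X0, hxm]
      have hfm : t.choose m • ((⇑D)^[t - m] (x0 ^ e) * (⇑D)^[m] x0) -
          C ((r' : 𝕜)) * xm ^ (e + 1) ∈ I := by
        rw [hts, hDm]
        have hcast : (C ((r' : 𝕜)) : MvPolynomial (Σ j : Fin k, Fin (n j + 1)) 𝕜) =
            (t.choose m : MvPolynomial (Σ j : Fin k, Fin (n j + 1)) 𝕜) *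
              C ((lam m : ℕ) : 𝕜) * C ((r : 𝕜)) := by
          have hnc : ((t.choose m : ℕ) : MvPolynomial (Σ j : Fin k, Fin (n j + 1)) 𝕜) =
              C ((t.choose m : ℕ) : 𝕜) := by rw [map_natCast]
          rw [hnc, ← map_mul, ← map_mul]
          congr 1
          rw [hr']
          push_cast
          ring
        have hsplit : t.choose m • ((⇑D)^[e * m] (x0 ^ e) * (C ((lam m : ℕ) : 𝕜) * xm)) -
            C ((r' : 𝕜)) * xm ^ (e + 1) =
            (t.choose m : MvPolynomial (Σ j : Fin k, Fin (n j + 1)) 𝕜) *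
              (C ((lam m : ℕ) : 𝕜) * xm) *
              (((⇑D)^[e * m] (x0 ^ e)) - C ((r : 𝕜)) * xm ^ e) := by
          rw [nsmul_eq_mul, hcast, pow_succ]
          ring
        rw [hsplit]
        exact Ideal.mul_mem_left _ _ hw
      have hre : (t.choose m • ((⇑D)^[t - m] (x0 ^ e) * (⇑D)^[m] x0) +
            ∑ i ∈ (range (t + 1)).erase m,
              t.choose i • ((⇑D)^[t - i] (x0 ^ e) * (⇑D)^[i] x0)) -
          C ((r' : 𝕜)) * xm ^ (e + 1) =
          (t.choose m • ((⇑D)^[t - m] (x0 ^ e) * (⇑D)^[m] x0) -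
            C ((r' : 𝕜)) * xm ^ (e + 1)) +
          ∑ i ∈ (range (t + 1)).erase m,
            t.choose i • ((⇑D)^[t - i] (x0 ^ e) * (⇑D)^[i] x0) := by
        ring
      rw [hre]
      exact Ideal.add_mem I hfm (Ideal.sum_mem I hmem)
  obtain ⟨r, hr, hmem⟩ := main e
  exact ⟨(r : 𝕜), Rat.cast_ne_zero.mpr hr.ne', ⟨r, hr, rfl⟩, hmem⟩
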